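/- Let K1 < K2 < K3 be real numbers, let f : [K1, K3] → ℝ be strictly convex and strictly increasing, and let 0 < P1 < P3 be real numbers. Define the f-modified linear interpolant P2 = (P1·(f(K3) − f(K2)) + P3·(f(K2) − f(K1)))/(f(K3) − f(K1)). Then the three discrete no-arbitrage conditions hold: P3 > 0, P2 < P3, and the butterfly spread (K3 − K2)·P1 − (K3 − K1)·P2 + (K2 − K1)·P3 > 0. -/

import Mathlib

/-!
Write `P2 = P1 + w (P3 - P1)` with `w = (f K2 - f K1) / (f K3 - f K1)`, the weight that linear
interpolation in the variable `f(K)` gives to `P3`. Then the butterfly spread equals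
`((K2 - K1) - w (K3 - K1)) (P3 - P1)`, and strict convexity of `f` says exactly that `w` is
smaller than the weight `(K2 - K1) / (K3 - K1)` of ordinary linear interpolation in `K`.
Monotonicity of `f` makes `0 < w < 1`, so `P2` lies strictly between `P1` and `P3`.
-/

theorem StrictConvexOn.div_sub_mul_lt {s : Set ℝ} {f : ℝ → ℝ} (hf : StrictConvexOn ℝ s f)
    {x y z : ℝ} (hx : x ∈ s) (hz : z ∈ s) (hxy : x < y) (hyz : y < z) (hfxz : f x < f z) :
    (f y - f x) / (f z - f x) * (z - x) < y - x := by
  rw [div_mul_eq_mul_div, div_lt_iff₀ (sub_pos.2 hfxz)]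
  linarith [hf.secant_strict_mono_aux1 hx hz hxy hyz]

theorem add_mul_sub_lt_of_lt_one {a b w : ℝ} (hw : w < 1) (hab : a < b) :
    a + w * (b - a) < b := by
  nlinarith

theorem butterfly_pos_of_mul_lt {K1 K2 K3 P1 P3 w : ℝ} (hw : w * (K3 - K1) < K2 - K1)
    (hP : P1 < P3) :
    0 < (K3 - K2) * P1 - (K3 - K1) * (P1 + w * (P3 - P1)) + (K2 - K1) * P3 := by
  have hBs : (K3 - K2) * P1 - (K3 - K1) * (P1 + w * (P3 - P1)) + (K2 - K1) * P3
      = (K2 - K1 - w * (K3 - K1)) * (P3 - P1) := by ring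
  rw [hBs]
  exact mul_pos (sub_pos.2 hw) (sub_pos.2 hP)

/-- The `f`-modified linear interpolation with `f` strictly convex and strictly increasing
on `[K1, K3]` satisfies the three discrete no-arbitrage conditions. -/
theorem stmt_4 (K1 K2 K3 : ℝ) (h12 : K1 < K2) (h23 : K2 < K3)
    (f : ℝ → ℝ) (hconv : StrictConvexOn ℝ (Set.Icc K1 K3) f)
    (hmono : StrictMonoOn f (Set.Icc K1 K3))
    (P1 P3 : ℝ) (hP1 : 0 < P1) (hP13 : P1 < P3)
    (P2 : ℝ)
    (hP2 : P2 = (P1 * (f K3 - f K2) + P3 * (f K2 - f K1)) / (f K3 - f K1)) :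
    0 < P3 ∧ P2 < P3 ∧
    0 < (K3 - K2) * P1 - (K3 - K1) * P2 + (K2 - K1) * P3 := by
  have hK1 : K1 ∈ Set.Icc K1 K3 := Set.left_mem_Icc.2 (h12.trans h23).le
  have hK2 : K2 ∈ Set.Icc K1 K3 := ⟨h12.le, h23.le⟩
  have hK3 : K3 ∈ Set.Icc K1 K3 := Set.right_mem_Icc.2 (h12.trans h23).le
  have hf12 : f K1 < f K2 := hmono hK1 hK2 h12
  have hf23 : f K2 < f K3 := hmono hK2 hK3 h23
  have hf13 : 0 < f K3 - f K1 := sub_pos.2 (hf12.trans hf23)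
  set w := (f K2 - f K1) / (f K3 - f K1) with hw
  have hP2w : P2 = P1 + w * (P3 - P1) := by
    rw [hP2, hw]
    field_simp [hf13.ne']
    ring
  have hw1 : w < 1 := (div_lt_one hf13).2 (by linarith)
  rw [hP2w]
  exact ⟨hP1.trans hP13, add_mul_sub_lt_of_lt_one hw1 hP13,
    butterfly_pos_of_mul_lt (hconv.div_sub_mul_lt hK1 hK3 h12 h23 (hf12.trans hf23)) hP13⟩
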